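/- For elementary cellular automaton Rule 30 on a ring of size n ≥ 2, the all-zeros configuration 0^n is a fixed point, and the alternating configurations (01)^{n/2} and (10)^{n/2} are fixed points when n is even; moreover these are the only fixed points. -/

import Mathlib

/-- Single-cell update: replace the state of cell `i` by the local rule applied
to its neighborhood on the ring `ZMod n`. -/
def eupdate (n : ℕ) (f : Bool → Bool → Bool → Bool) (x : ZMod n → Bool) (i : ZMod n) :
    ZMod n → Bool :=
  Function.update x i (f (x (i - 1)) (x i) (x (i + 1)))

/-- Synchronous (parallel) step. -/
def parStep (n : ℕ) (f : Bool → Bool → Bool → Bool) (x : ZMod n → Bool) : ZMod n → Bool :=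
  fun i => f (x (i - 1)) (x i) (x (i + 1))

/-- `x` is a fixed point of the parallel dynamics. -/
def IsFixedConfig (n : ℕ) (f : Bool → Bool → Bool → Bool) (x : ZMod n → Bool) : Prop :=
  ∀ i : ZMod n, f (x (i - 1)) (x i) (x (i + 1)) = x i

/-- One full sequential step under the sequential update mode `μ`
(a permutation of the cells): update cells one at a time in the order
`μ 0, μ 1, …, μ (n-1)`. -/
def seqStep (n : ℕ) (f : Bool → Bool → Bool → Bool) (μ : Fin n ≃ ZMod n)
    (x : ZMod n → Bool) : ZMod n → Bool :=
  (List.finRange n).foldl (fun y k => eupdate n f y (μ k)) x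

/-- One full sequential step under the descending order `(n-1, n-2, …, 0)`. -/
def seqStepDesc (n : ℕ) (f : Bool → Bool → Bool → Bool) (x : ZMod n → Bool) : ZMod n → Bool :=
  ((List.range n).reverse).foldl (fun y k => eupdate n f y (k : ZMod n)) x

/-- One full sequential step under the ascending order `(0, 1, …, n-1)`. -/
def seqStepAsc (n : ℕ) (f : Bool → Bool → Bool → Bool) (x : ZMod n → Bool) : ZMod n → Bool :=
  (List.range n).foldl (fun y k => eupdate n f y (k : ZMod n)) x

def rule30 : Bool → Bool → Bool → Bool
  | true, true, true => false
  | true, true, false => false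
  | true, false, true => false
  | true, false, false => true
  | false, true, true => true
  | false, true, false => true
  | false, false, true => true
  | false, false, false => false

/-!
A `true` cell of a Rule 30 fixed point forces the pattern `1 0 1` starting at it: the rule reads
`f(a, b, c) = a xor (b or c)`, so at the cell after a `1` the value must be `!(b or c) = b`,
forcing `b = 0` and `c = 1`. Iterating, any fixed point other than `0ⁿ` alternates, which on a
ring of size `n` is possible only for even `n`, with the two phases `(10)^{n/2}` and `(01)^{n/2}`.
-/

def Alternating {G : Type*} [Add G] [One G] (x : G → Bool) : Prop :=
  ∀ i, x (i + 1) = !x i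

theorem ZMod.val_add_one_mod_two {n : ℕ} [NeZero n] (h : 2 ∣ n) (i : ZMod n) :
    (i + 1).val % 2 = (i.val + 1) % 2 := by
  rw [ZMod.val_add, Nat.mod_mod_of_dvd _ h, ZMod.val_one_eq_one_mod, Nat.add_mod,
    Nat.mod_mod_of_dvd _ h, ← Nat.add_mod]

section Rule30

variable {n : ℕ} {x : ZMod n → Bool}

theorem isFixedConfig_rule30_zero : IsFixedConfig n rule30 (fun _ => false) :=
  fun _ => rfl

theorem Alternating.isFixedConfig_rule30 (hx : Alternating x) : IsFixedConfig n rule30 x := by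
  intro i
  have hi : x i = !x (i - 1) := by simpa using hx (i - 1)
  rw [hx i, hi]
  cases x (i - 1) <;> rfl

theorem IsFixedConfig.rule30_succ_false_and_add_two_true (hx : IsFixedConfig n rule30 x)
    {j : ZMod n} (hj : x j = true) : x (j + 1) = false ∧ x (j + 2) = true := by
  have h := hx (j + 1)
  rw [add_sub_cancel_right, add_assoc, one_add_one_eq_two, hj] at h
  revert h
  cases x (j + 1) <;> cases x (j + 2) <;> decide

theorem IsFixedConfig.rule30_add_two_mul_true (hx : IsFixedConfig n rule30 x)
    {j : ZMod n} (hj : x j = true) (k : ℕ) : x (j + (2 * k : ℕ)) = true := by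
  induction k with
  | zero => simpa using hj
  | succ k ih =>
    have e : j + ((2 * (k + 1) : ℕ) : ZMod n) = j + ((2 * k : ℕ) : ZMod n) + 2 := by
      push_cast; ring
    exact e ▸ (hx.rule30_succ_false_and_add_two_true ih).2

theorem IsFixedConfig.rule30_alternating [NeZero n] (hx : IsFixedConfig n rule30 x)
    (hne : x ≠ fun _ => false) : Alternating x := by
  obtain ⟨j, hj⟩ : ∃ j, x j = true := by
    by_contra! h
    exact hne (funext fun i => by simpa using h i)
  have even_true (k : ℕ) := hx.rule30_add_two_mul_true hj k
  have odd_false (k : ℕ) := (hx.rule30_succ_false_and_add_two_true (even_true k)).1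
  intro i
  obtain ⟨m, rfl⟩ : ∃ m : ℕ, i = j + m := ⟨(i - j).val, by simp⟩
  rcases Nat.even_or_odd' m with ⟨k, rfl | rfl⟩
  · rw [even_true, odd_false, Bool.not_true]
  · have e : j + ((2 * k + 1 : ℕ) : ZMod n) + 1 = j + ((2 * (k + 1) : ℕ) : ZMod n) := by
      push_cast; ring
    rw [e, even_true, Nat.cast_add, Nat.cast_one, ← add_assoc, odd_false, Bool.not_false]

theorem isFixedConfig_rule30_iff [NeZero n] :
    IsFixedConfig n rule30 x ↔ x = (fun _ => false) ∨ Alternating x := by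
  refine ⟨fun hx => or_iff_not_imp_left.2 hx.rule30_alternating, ?_⟩
  rintro (rfl | hx)
  · exact isFixedConfig_rule30_zero
  · exact hx.isFixedConfig_rule30

end Rule30

theorem Alternating.apply_add_natCast {G : Type*} [AddMonoidWithOne G] {x : G → Bool}
    (hx : Alternating x) (i : G) (k : ℕ) :
    x (i + k) = (x i ^^ decide (Odd k)) := by
  induction k with
  | zero => simp
  | succ k ih =>
    rw [Nat.cast_succ, ← add_assoc, hx, ih, ← Bool.xor_not]
    simp only [Nat.odd_add_one, decide_not]

section Alternating

variable {n : ℕ} {x : ZMod n → Bool}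

theorem Alternating.even (hx : Alternating x) : Even n := by
  have h := hx.apply_add_natCast 0 n
  rw [ZMod.natCast_self, add_zero] at h
  refine Nat.not_odd_iff_even.1 fun hodd => ?_
  cases h0 : x 0 <;> simp [h0, hodd] at h

theorem Alternating.apply_eq [NeZero n] (hx : Alternating x) (i : ZMod n) :
    x i = (x 0 ^^ decide (i.val % 2 = 1)) := by
  simpa [← Nat.odd_iff] using hx.apply_add_natCast 0 i.val

theorem alternating_iff [NeZero n] :
    Alternating x ↔ Even n ∧ ((∀ i : ZMod n, x i = decide (i.val % 2 = 0)) ∨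
      (∀ i : ZMod n, x i = decide (i.val % 2 = 1))) := by
  constructor
  · intro hx
    refine ⟨hx.even, ?_⟩
    cases h0 : x 0
    · exact Or.inr fun i => by rw [hx.apply_eq i, h0, Bool.false_xor]
    · refine Or.inl fun i => ?_
      rcases Nat.mod_two_eq_zero_or_one i.val with h | h <;> simp [hx.apply_eq i, h0, h]
  · rintro ⟨heven, hx | hx⟩ i <;>
    · rw [hx, hx, ZMod.val_add_one_mod_two heven.two_dvd]
      rcases Nat.mod_two_eq_zero_or_one i.val with h | h <;> simp [Nat.add_mod, h]

end Alternating

theorem rule30_fixed_points (n : ℕ) (hn : 2 ≤ n) (x : ZMod n → Bool) :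
    IsFixedConfig n rule30 x ↔
      (x = (fun _ => false) ∨
        (Even n ∧ ((∀ i : ZMod n, x i = decide (i.val % 2 = 0)) ∨
                   (∀ i : ZMod n, x i = decide (i.val % 2 = 1))))) := by
  have : NeZero n := ⟨by omega⟩
  rw [isFixedConfig_rule30_iff, alternating_iff]
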